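/- arXiv:0709.0535 — 3 statements merged into one kernel-verified Lean document; each statement's English description precedes it below -/
import Mathlib

section
/- Let d, K, N be positive integers with K ≤ d and N ≥ 2, and let X_1, …, X_N ∈ ℂ^{d×K} be matrices with orthonormal columns (X_nᴴ X_n = I_K for each n). Then the squared spectral packing diameter satisfies min_{m ≠ n} (1 − ‖X_mᴴ X_n‖_{2,2}²) ≤ ((d − K)/d) · (N/(N − 1)), where ‖·‖_{2,2} denotes the spectral norm (largest singular value). -/
/-!
With `P a = X a (X a)ᴴ` the orthogonal projections and `S = ∑ a, P a` the frame operator,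
the frame potential `∑ a b, ‖(X a)ᴴ X b‖_F² = ‖S‖_F²` is at least `(tr S)² / d = (N K)² / d`
by Cauchy–Schwarz on the diagonal of `S`. The `N` diagonal terms contribute exactly `N K`, and
each off-diagonal term is at most `K ‖(X a)ᴴ X b‖²`, so the average of `‖(X a)ᴴ X b‖²` over the
`N (N - 1)` ordered pairs `a ≠ b` is at least `(N K - d) / (d (N - 1))`; some pair attains the
average, and `1 - (N K - d) / (d (N - 1)) = ((d - K) / d) (N / (N - 1))`.
-/

open scoped Matrix

/-- The spectral norm `‖A‖_{2,2}` of a square complex matrix: the operator norm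
induced by the Euclidean (ℓ₂) vector norm, i.e. the largest singular value. -/
noncomputable def specNorm {K : ℕ} (A : Matrix (Fin K) (Fin K) ℂ) : ℝ :=
  ‖LinearMap.toContinuousLinearMap (Matrix.toEuclideanLin A)‖

open Finset

lemma sum_sq_norm_col_le_specNorm_sq {K : ℕ} (A : Matrix (Fin K) (Fin K) ℂ) (j : Fin K) :
    ∑ i, ‖A i j‖ ^ 2 ≤ specNorm A ^ 2 := by
  have h := (LinearMap.toContinuousLinearMap (Matrix.toEuclideanLin A)).le_opNorm
    (EuclideanSpace.single j 1)
  rw [PiLp.norm_single, norm_one, mul_one] at h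
  have hcol : ‖(LinearMap.toContinuousLinearMap (Matrix.toEuclideanLin A))
      (EuclideanSpace.single j 1)‖ ^ 2 = ∑ i, ‖A i j‖ ^ 2 := by
    simp [EuclideanSpace.norm_sq_eq, Matrix.toLpLin_apply]
  rw [← hcol]
  exact pow_le_pow_left₀ (norm_nonneg _) h 2

lemma sum_sum_sq_norm_le_card_mul_specNorm_sq {K : ℕ} (A : Matrix (Fin K) (Fin K) ℂ) :
    ∑ i, ∑ j, ‖A i j‖ ^ 2 ≤ K * specNorm A ^ 2 := calc
  ∑ i, ∑ j, ‖A i j‖ ^ 2 = ∑ j, ∑ i, ‖A i j‖ ^ 2 := sum_comm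
  _ ≤ ∑ _j : Fin K, specNorm A ^ 2 := sum_le_sum fun j _ => sum_sq_norm_col_le_specNorm_sq A j
  _ = K * specNorm A ^ 2 := by simp

namespace Matrix
variable {ι m n k 𝕜 E : Type*} [Fintype ι] [Fintype m] [Fintype n] [Fintype k]

lemma trace_mul_conjTranspose_self [RCLike 𝕜] (A : Matrix m n 𝕜) :
    (A * Aᴴ).trace = ((∑ i, ∑ j, ‖A i j‖ ^ 2 : ℝ) : 𝕜) := by
  simp [trace, mul_apply, RCLike.mul_conj]

lemma sq_norm_trace_le [SeminormedAddCommGroup E] (A : Matrix n n E) :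
    ‖A.trace‖ ^ 2 ≤ Fintype.card n * ∑ i, ∑ j, ‖A i j‖ ^ 2 := calc
  ‖A.trace‖ ^ 2 ≤ (∑ i, ‖A i i‖) ^ 2 := by gcongr; exact norm_sum_le _ _
  _ ≤ Fintype.card n * ∑ i, ‖A i i‖ ^ 2 := sq_sum_le_card_mul_sum_sq
  _ ≤ Fintype.card n * ∑ i, ∑ j, ‖A i j‖ ^ 2 := by
    gcongr with i
    exact single_le_sum (f := fun j => ‖A i j‖ ^ 2) (fun _ _ => by positivity) (mem_univ i)

noncomputable def framePotential [RCLike 𝕜] (X : ι → Matrix m k 𝕜) : ℝ :=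
  ∑ a, ∑ b, ∑ i, ∑ j, ‖((X a)ᴴ * X b) i j‖ ^ 2

lemma framePotential_eq [RCLike 𝕜] (X : ι → Matrix m k 𝕜) :
    framePotential X = ∑ i, ∑ j, ‖(∑ a, X a * (X a)ᴴ) i j‖ ^ 2 := by
  have hS : (∑ a, X a * (X a)ᴴ)ᴴ = ∑ a, X a * (X a)ᴴ := by
    simp [conjTranspose_sum, conjTranspose_mul]
  apply (RCLike.ofReal_injective (K := 𝕜))
  rw [← trace_mul_conjTranspose_self, hS, sum_mul_sum, trace_sum, framePotential,
    RCLike.ofReal_sum]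
  refine sum_congr rfl fun a _ => ?_
  rw [trace_sum, RCLike.ofReal_sum]
  refine sum_congr rfl fun b _ => ?_
  rw [← trace_mul_conjTranspose_self, conjTranspose_mul, conjTranspose_conjTranspose]
  simp only [Matrix.mul_assoc]
  rw [trace_mul_comm (X a)]
  simp only [Matrix.mul_assoc]

lemma sq_card_mul_card_le_card_mul_framePotential [RCLike 𝕜] [DecidableEq k]
    (X : ι → Matrix m k 𝕜) (hX : ∀ a, (X a)ᴴ * X a = 1) :
    ((Fintype.card ι * Fintype.card k : ℕ) : ℝ) ^ 2 ≤ Fintype.card m * framePotential X := by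
  have htrace : (∑ a, X a * (X a)ᴴ).trace = ((Fintype.card ι * Fintype.card k : ℕ) : 𝕜) := by
    simp [trace_sum, trace_mul_comm (X _), hX]
  have := sq_norm_trace_le (∑ a, X a * (X a)ᴴ)
  rwa [htrace, RCLike.norm_natCast, ← framePotential_eq] at this

end Matrix

lemma Finset.sum_sum_eq_sum_add_sum_offDiag {ι M : Type*} [Fintype ι] [DecidableEq ι]
    [AddCommMonoid M] (f : ι → ι → M) :
    ∑ a, ∑ b, f a b = ∑ a, f a a + ∑ p ∈ univ.offDiag, f p.1 p.2 := by
  rw [← sum_product' (f := f), ← diag_union_offDiag, sum_union (disjoint_diag_offDiag _),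
    sum_diag]

lemma exists_ne_le_of_card_mul_le_sum_offDiag {ι : Type*} [Fintype ι] [DecidableEq ι]
    [Nontrivial ι] {g : ι → ι → ℝ} {c : ℝ}
    (h : Fintype.card ι * (Fintype.card ι - 1) * c ≤ ∑ p ∈ univ.offDiag, g p.1 p.2) :
    ∃ a b, a ≠ b ∧ c ≤ g a b := by
  have hcard : ((univ : Finset ι).offDiag.card : ℝ) = Fintype.card ι * (Fintype.card ι - 1) := by
    rw [offDiag_card, card_univ, Nat.cast_sub (Nat.le_mul_self _), Nat.cast_mul]
    ring
  obtain ⟨a₀, b₀, hab₀⟩ := exists_pair_ne ι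
  have hne : (univ : Finset ι).offDiag.Nonempty := ⟨(a₀, b₀), by simpa using hab₀⟩
  obtain ⟨⟨a, b⟩, hab, hc⟩ := exists_le_of_sum_le hne
    (f := fun _ => c) (g := fun p : ι × ι => g p.1 p.2)
    (by rwa [sum_const, nsmul_eq_mul, hcard])
  exact ⟨a, b, (mem_offDiag.1 hab).2.2, hc⟩

lemma card_mul_le_card_mul_sum_offDiag_specNorm_sq {ι m : Type*} [Fintype ι] [Fintype m]
    [DecidableEq ι] {K : ℕ} (hK : 0 < K) (X : ι → Matrix m (Fin K) ℂ)
    (hX : ∀ a, (X a)ᴴ * X a = 1) :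
    Fintype.card ι * (Fintype.card ι * K - Fintype.card m : ℝ) ≤
      Fintype.card m * ∑ p ∈ univ.offDiag, specNorm ((X p.1)ᴴ * X p.2) ^ 2 := by
  have hdiag : ∀ a, ∑ i, ∑ j, ‖((X a)ᴴ * X a) i j‖ ^ 2 = (K : ℝ) := by
    simp [hX, Matrix.one_apply, apply_ite]
  have hsplit : Matrix.framePotential X = Fintype.card ι * K +
      ∑ p ∈ univ.offDiag, ∑ i, ∑ j, ‖((X p.1)ᴴ * X p.2) i j‖ ^ 2 := by
    rw [Matrix.framePotential, sum_sum_eq_sum_add_sum_offDiag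
      (fun a b => ∑ i, ∑ j, ‖((X a)ᴴ * X b) i j‖ ^ 2)]
    simp only [hdiag, sum_const, card_univ, nsmul_eq_mul]
  have hframe := Matrix.sq_card_mul_card_le_card_mul_framePotential X hX
  push_cast [Fintype.card_fin] at hframe
  rw [hsplit] at hframe
  refine le_of_mul_le_mul_left ?_ (Nat.cast_pos.2 hK : (0 : ℝ) < K)
  calc (K : ℝ) * (Fintype.card ι * (Fintype.card ι * K - Fintype.card m))
      = (Fintype.card ι * K) ^ 2 - Fintype.card m * (Fintype.card ι * K) := by ring
    _ ≤ Fintype.card m * ∑ p ∈ univ.offDiag, ∑ i, ∑ j, ‖((X p.1)ᴴ * X p.2) i j‖ ^ 2 := by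
      linarith
    _ ≤ Fintype.card m * ∑ p ∈ univ.offDiag, K * specNorm ((X p.1)ᴴ * X p.2) ^ 2 := by
      gcongr with p
      exact sum_sum_sq_norm_le_card_mul_specNorm_sq _
    _ = K * (Fintype.card m * ∑ p ∈ univ.offDiag, specNorm ((X p.1)ᴴ * X p.2) ^ 2) := by
      rw [← mul_sum]; ring

theorem rankin_bound_spectral_general (d K N : ℕ) (hd : 0 < d) (hK : 0 < K)
    (hN : 2 ≤ N) (X : Fin N → Matrix (Fin d) (Fin K) ℂ)
    (hX : ∀ n, (X n)ᴴ * X n = 1) :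
    ∃ m n : Fin N, m ≠ n ∧
      1 - specNorm ((X m)ᴴ * X n) ^ 2 ≤
        (((d : ℝ) - K) / d) * ((N : ℝ) / ((N : ℝ) - 1)) := by
  have : Nontrivial (Fin N) := Fin.nontrivial_iff_two_le.2 hN
  have hdR : (0 : ℝ) < d := by exact_mod_cast hd
  have hNR : (1 : ℝ) < N := by exact_mod_cast hN
  have hN1 : (N : ℝ) - 1 ≠ 0 := by linarith
  have hoff := card_mul_le_card_mul_sum_offDiag_specNorm_sq hK X hX
  simp only [Fintype.card_fin] at hoff
  obtain ⟨m, n, hmn, hc⟩ := exists_ne_le_of_card_mul_le_sum_offDiag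
      (g := fun m n => specNorm ((X m)ᴴ * X n) ^ 2) (c := (N * K - d) / (d * (N - 1))) <| calc
    (Fintype.card (Fin N) : ℝ) * (Fintype.card (Fin N) - 1) * ((N * K - d) / (d * (N - 1)))
        = N * (N * K - d) / d := by
      rw [Fintype.card_fin]; field_simp
    _ ≤ _ := by rwa [div_le_iff₀' hdR]
  refine ⟨m, n, hmn, ?_⟩
  have hbound : 1 - ((N : ℝ) * K - d) / (d * (N - 1)) = (d - K) / d * (N / (N - 1)) := by
    field_simp
    ring
  linarith

/-- **Rankin bound for the spectral distance**: for `N ≥ 2` subspaces of `ℂ^d`, each of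
dimension `K`, represented by matrices with orthonormal columns, the squared spectral
packing diameter `min_{m ≠ n} (1 − ‖X_mᴴ X_n‖_{2,2}²)` is at most
`((d−K)/d)·(N/(N−1))`. -/
theorem rankin_bound_spectral (d K N : ℕ) (hd : 0 < d) (hK : 0 < K) (hKd : K ≤ d)
    (hN : 2 ≤ N) (X : Fin N → Matrix (Fin d) (Fin K) ℂ)
    (hX : ∀ n, (X n)ᴴ * X n = 1) :
    ∃ m n : Fin N, m ≠ n ∧
      1 - specNorm ((X m)ᴴ * X n) ^ 2 ≤
        (((d : ℝ) - K) / d) * ((N : ℝ) / ((N : ℝ) - 1)) :=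
  rankin_bound_spectral_general d K N hd hK hN X hX
end

section
/- Let K be a positive integer, μ > 0, and let B ∈ ℂ^{K×K} have a singular value decomposition B = U C Vᴴ, where U and V are unitary K × K matrices and C = diag(c_1, …, c_K) with c_1 ≥ … ≥ c_K ≥ 0. Define A = U · diag(min(c_1, μ), …, min(c_K, μ)) · Vᴴ. Then ‖A‖_{2,2} ≤ μ, and for every matrix A' ∈ ℂ^{K×K} with ‖A'‖_{2,2} ≤ μ one has ‖A − B‖_F ≤ ‖A' − B‖_F, with equality only if A' = A. That is, A is the unique minimizer of the Frobenius distance to B over the spectral-norm ball of radius μ. -/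
/-!
Conjugating by the unitaries `U`, `V` preserves both norms and reduces everything to
`M = Uᴴ A' V` against the diagonal matrices `C = diag c` and `D = diag (min c μ)`.
A matrix in the spectral ball has diagonal entries with `Re M_kk ≤ |M_kk| ≤ μ`, and for such a
complex number `z` the point `min t μ` is the projection of `t` onto the half-plane `Re ≤ μ`, so
`|min t μ - t|² + |z - min t μ|² ≤ |z - t|²`. Off the diagonal `C` and `D` vanish, so summing
over entries gives `‖A - B‖_F² + ‖A' - A‖_F² ≤ ‖A' - B‖_F²`, which yields both the inequality
and uniqueness.
-/

open scoped Matrix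

/-- The Frobenius norm of a complex matrix: `‖A‖_F = (trace(AᴴA))^{1/2}
= (∑ᵢⱼ |Aᵢⱼ|²)^{1/2}`. -/
noncomputable def frobNorm {m n : Type*} [Fintype m] [Fintype n]
    (A : Matrix m n ℂ) : ℝ :=
  Real.sqrt (∑ i, ∑ j, ‖A i j‖ ^ 2)

open Matrix
open scoped Matrix.Norms.L2Operator

section Frobenius

variable {l m n p : Type*} [Fintype l] [Fintype m] [Fintype n] [Fintype p]

lemma frobNorm_nonneg (X : Matrix m n ℂ) : 0 ≤ frobNorm X := Real.sqrt_nonneg _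

lemma frobNorm_sq (X : Matrix m n ℂ) : frobNorm X ^ 2 = ∑ i, ∑ j, ‖X i j‖ ^ 2 :=
  Real.sq_sqrt (by positivity)

lemma ofReal_frobNorm_sq (X : Matrix m n ℂ) : ((frobNorm X ^ 2 : ℝ) : ℂ) = (Xᴴ * X).trace := by
  simp only [frobNorm_sq, trace, diag, mul_apply, conjTranspose_apply, RCLike.star_def,
    Complex.conj_mul', Complex.ofReal_sum, Complex.ofReal_pow]
  exact Finset.sum_comm

lemma frobNorm_eq_zero {X : Matrix m n ℂ} (hX : frobNorm X = 0) : X = 0 := by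
  open ComplexOrder in
  refine trace_conjTranspose_mul_self_eq_zero_iff.mp ?_
  rw [← ofReal_frobNorm_sq, hX]
  simp

lemma frobNorm_mul_mul_conjTranspose [DecidableEq m] [DecidableEq n] {U : Matrix l m ℂ}
    {V : Matrix p n ℂ} (hU : Uᴴ * U = 1) (hV : Vᴴ * V = 1) (X : Matrix m n ℂ) :
    frobNorm (U * X * Vᴴ) = frobNorm X := by
  have htrace : (U * X * Vᴴ)ᴴ * (U * X * Vᴴ) = V * (Xᴴ * X) * Vᴴ := by
    simp only [conjTranspose_mul, conjTranspose_conjTranspose, Matrix.mul_assoc]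
    rw [← Matrix.mul_assoc Uᴴ, hU, Matrix.one_mul]
  have hsq : frobNorm (U * X * Vᴴ) ^ 2 = frobNorm X ^ 2 := by
    apply Complex.ofReal_injective
    rw [ofReal_frobNorm_sq, ofReal_frobNorm_sq, htrace, trace_mul_comm, ← Matrix.mul_assoc, hV,
      Matrix.one_mul]
  exact (pow_left_inj₀ (frobNorm_nonneg _) (frobNorm_nonneg _) two_ne_zero).mp hsq

end Frobenius

lemma Complex.norm_sub_min_sq_add_le {z : ℂ} {μ : ℝ} (hz : z.re ≤ μ) (t : ℝ) :
    ‖((min t μ : ℝ) : ℂ) - t‖ ^ 2 + ‖z - (min t μ : ℝ)‖ ^ 2 ≤ ‖z - t‖ ^ 2 := by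
  rcases le_total t μ with htμ | hμt
  · simp [min_eq_left htμ]
  · simp only [min_eq_right hμt, Complex.sq_norm, Complex.normSq_apply, Complex.sub_re,
      Complex.sub_im, Complex.ofReal_re, Complex.ofReal_im]
    nlinarith

lemma sq_frobNorm_sub_diagonal_min_add_le {n : Type*} [Fintype n] [DecidableEq n] {μ : ℝ}
    {M : Matrix n n ℂ} (hM : ∀ k, (M k k).re ≤ μ) (c : n → ℝ) :
    frobNorm (diagonal (fun k => ((min (c k) μ : ℝ) : ℂ)) - diagonal (fun k => (c k : ℂ))) ^ 2
        + frobNorm (M - diagonal (fun k => ((min (c k) μ : ℝ) : ℂ))) ^ 2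
      ≤ frobNorm (M - diagonal (fun k => (c k : ℂ))) ^ 2 := by
  simp only [frobNorm_sq, ← Finset.sum_add_distrib]
  refine Finset.sum_le_sum fun i _ => Finset.sum_le_sum fun j _ => ?_
  rcases eq_or_ne i j with rfl | hij
  · simpa using Complex.norm_sub_min_sq_add_le (hM i) (c i)
  · simp [hij]

lemma mul_mul_conjTranspose_cancel {n : Type*} [Fintype n] [DecidableEq n] {U V : Matrix n n ℂ}
    (hU : Uᴴ * U = 1) (hV : Vᴴ * V = 1) (X : Matrix n n ℂ) : U * (Uᴴ * X * V) * Vᴴ = X := by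
  simp only [← Matrix.mul_assoc, mul_eq_one_comm.mp hU, Matrix.one_mul]
  rw [Matrix.mul_assoc, mul_eq_one_comm.mp hV, Matrix.mul_one]

namespace Matrix

variable {𝕜 m n : Type*} [RCLike 𝕜] [Fintype m] [Fintype n] [DecidableEq n]

lemma norm_apply_le_l2_opNorm (A : Matrix m n 𝕜) (i : m) (j : n) : ‖A i j‖ ≤ ‖A‖ := by
  have h := A.l2_opNorm_mulVec (EuclideanSpace.single j 1)
  rw [PiLp.norm_single, norm_one, mul_one] at h
  calc ‖A i j‖ = ‖(EuclideanSpace.equiv m 𝕜).symm (A *ᵥ Pi.single j 1) i‖ := by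
        simp [mulVec_single]
    _ ≤ ‖A‖ := (PiLp.norm_apply_le _ i).trans h

lemma l2_opNorm_mul_mul_conjTranspose {U V : Matrix n n 𝕜} (hU : Uᴴ * U = 1)
    (hV : Vᴴ * V = 1) (X : Matrix n n 𝕜) : ‖U * X * Vᴴ‖ = ‖X‖ := by
  have hV' : Vᴴ ∈ unitaryGroup n 𝕜 := by
    rw [mem_unitaryGroup_iff', star_eq_conjTranspose, conjTranspose_conjTranspose]
    exact mul_eq_one_comm.mp hV
  rw [CStarRing.norm_mul_mem_unitary _ hV',
    CStarRing.norm_mem_unitary_mul _ (mem_unitaryGroup_iff'.mpr hU)]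

lemma l2_opNorm_diagonal_min_le {c : n → ℝ} {μ : ℝ} (hc : ∀ k, 0 ≤ c k) (hμ : 0 ≤ μ) :
    ‖diagonal (fun k => ((min (c k) μ : ℝ) : 𝕜))‖ ≤ μ := by
  rw [l2_opNorm_diagonal, pi_norm_le_iff_of_nonneg hμ]
  intro k
  rw [RCLike.norm_ofReal, abs_of_nonneg (le_min (hc k) hμ)]
  exact min_le_right _ _

end Matrix

lemma specNorm_eq_l2_opNorm {K : ℕ} (A : Matrix (Fin K) (Fin K) ℂ) : specNorm A = ‖A‖ := rfl

theorem nearest_spectral_norm_ball_general (K : ℕ) (μ : ℝ) (hμ : 0 < μ)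
    (U V : Matrix (Fin K) (Fin K) ℂ) (hU : Uᴴ * U = 1) (hV : Vᴴ * V = 1)
    (c : Fin K → ℝ) (hc0 : ∀ k, 0 ≤ c k)
    (B : Matrix (Fin K) (Fin K) ℂ)
    (hB : B = U * Matrix.diagonal (fun k => ((c k : ℝ) : ℂ)) * Vᴴ)
    (A : Matrix (Fin K) (Fin K) ℂ)
    (hA : A = U * Matrix.diagonal (fun k => ((min (c k) μ : ℝ) : ℂ)) * Vᴴ) :
    specNorm A ≤ μ ∧
      ∀ A' : Matrix (Fin K) (Fin K) ℂ, specNorm A' ≤ μ →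
        frobNorm (A - B) ≤ frobNorm (A' - B) ∧
          (frobNorm (A - B) = frobNorm (A' - B) → A' = A) := by
  set C := Matrix.diagonal (fun k => ((c k : ℝ) : ℂ))
  set D := Matrix.diagonal (fun k => ((min (c k) μ : ℝ) : ℂ))
  refine ⟨?_, fun A' hA' => ?_⟩
  · rw [specNorm_eq_l2_opNorm, hA, l2_opNorm_mul_mul_conjTranspose hU hV]
    exact l2_opNorm_diagonal_min_le hc0 hμ.le
  set M := Uᴴ * A' * V
  have hA'M : A' = U * M * Vᴴ := (mul_mul_conjTranspose_cancel hU hV A').symm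
  have hM : ‖M‖ ≤ μ := by
    rwa [specNorm_eq_l2_opNorm, hA'M, l2_opNorm_mul_mul_conjTranspose hU hV] at hA'
  have hMdiag k : (M k k).re ≤ μ :=
    (Complex.re_le_norm _).trans ((norm_apply_le_l2_opNorm M k k).trans hM)
  have key : frobNorm (A - B) ^ 2 + frobNorm (A' - A) ^ 2 ≤ frobNorm (A' - B) ^ 2 := by
    have h := sq_frobNorm_sub_diagonal_min_add_le hMdiag c
    rwa [← frobNorm_mul_mul_conjTranspose hU hV (D - C),
      ← frobNorm_mul_mul_conjTranspose hU hV (M - D),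
      ← frobNorm_mul_mul_conjTranspose hU hV (M - C), Matrix.mul_sub, Matrix.sub_mul,
      Matrix.mul_sub, Matrix.sub_mul, Matrix.mul_sub, Matrix.sub_mul, ← hA, ← hB, ← hA'M] at h
  refine ⟨(pow_le_pow_iff_left₀ (frobNorm_nonneg _) (frobNorm_nonneg _) two_ne_zero).mp
    (le_of_add_le_of_nonneg_left key (by positivity)), fun heq => ?_⟩
  have h0 : frobNorm (A' - A) = 0 := by
    rw [heq] at key
    nlinarith [frobNorm_nonneg (A' - A)]
  exact sub_eq_zero.mp (frobNorm_eq_zero h0)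

/-- **Projection onto the spectral-norm ball by singular value truncation.**  If
`B = U C Vᴴ` is a singular value decomposition with nonincreasing nonnegative
singular values `c`, then `A = U [C]_μ Vᴴ`, obtained by truncating the singular values
at `μ`, satisfies `‖A‖_{2,2} ≤ μ` and is the unique minimizer of the Frobenius distance
to `B` over the spectral-norm ball of radius `μ`. -/
theorem nearest_spectral_norm_ball (K : ℕ) (hK : 0 < K) (μ : ℝ) (hμ : 0 < μ)
    (U V : Matrix (Fin K) (Fin K) ℂ) (hU : Uᴴ * U = 1) (hV : Vᴴ * V = 1)
    (c : Fin K → ℝ) (hc0 : ∀ k, 0 ≤ c k) (hc : Antitone c)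
    (B : Matrix (Fin K) (Fin K) ℂ)
    (hB : B = U * Matrix.diagonal (fun k => ((c k : ℝ) : ℂ)) * Vᴴ)
    (A : Matrix (Fin K) (Fin K) ℂ)
    (hA : A = U * Matrix.diagonal (fun k => ((min (c k) μ : ℝ) : ℂ)) * Vᴴ) :
    specNorm A ≤ μ ∧
      ∀ A' : Matrix (Fin K) (Fin K) ℂ, specNorm A' ≤ μ →
        frobNorm (A - B) ≤ frobNorm (A' - B) ∧
          (frobNorm (A - B) = frobNorm (A' - B) → A' = A) :=
  nearest_spectral_norm_ball_general K μ hμ U V hU hV c hc0 B hB A hA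
end

section
/- Let d, N be positive integers with N ≥ 2, and let x_1, …, x_N be unit vectors in ℂ^d. Then min_{m ≠ n} (1 − |⟨x_m, x_n⟩|²) ≤ ((d − 1)/d) · (N/(N − 1)). -/
/-!
Lift each `x n` to the matrix `x n (x n)ᴴ`, a vector of `ℂ^(d × d)`: the lifts satisfy
`⟪x_m x_mᴴ, x_n x_nᴴ⟫ = |⟪x_m, x_n⟫|²` and `⟪I, x_n x_nᴴ⟫ = ‖x_n‖² = 1`, while `‖I‖² = d`.
Cauchy–Schwarz between `I` and the sum of the lifts gives `N² ≤ d ∑_{m,n} |⟪x_m, x_n⟫|²`.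
Discarding the `N` diagonal terms, some pair `m ≠ n` has `|⟪x_m, x_n⟫|²` at least the
off-diagonal average `(N²/d - N) / (N (N - 1))`, which rearranges to the bound.
-/

open Finset
open scoped BigOperators

theorem Finset.sum_offDiag_eq_sum_sub_sum_diag {α M : Type*} [Fintype α] [DecidableEq α]
    [AddCommGroup M] (g : α → α → M) :
    ∑ p ∈ univ.offDiag, g p.1 p.2 = ∑ m, ∑ n, g m n - ∑ n, g n n := by
  rw [eq_sub_iff_add_eq, ← sum_product' (f := g), ← diag_union_offDiag,
    sum_union (disjoint_diag_offDiag _), sum_diag, add_comm]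

theorem Fintype.exists_ne_offDiag_average_le {α : Type*} [Fintype α] [DecidableEq α]
    (hα : 2 ≤ Fintype.card α) (g : α → α → ℝ) :
    ∃ m n, m ≠ n ∧
      (∑ m, ∑ n, g m n - ∑ n, g n n) / (Fintype.card α * (Fintype.card α - 1)) ≤ g m n := by
  have hne : (univ.offDiag : Finset (α × α)).Nonempty := by
    obtain ⟨a, b, hab⟩ := Fintype.exists_pair_of_one_lt_card hα
    exact ⟨(a, b), mem_offDiag.mpr ⟨mem_univ a, mem_univ b, hab⟩⟩
  have hcard :
      (#(univ.offDiag : Finset (α × α)) : ℝ) = Fintype.card α * (Fintype.card α - 1) := by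
    rw [offDiag_card, card_univ, ← Nat.mul_sub_one, Nat.cast_mul, Nat.cast_pred (by omega)]
  obtain ⟨p, hp, hle⟩ := exists_le_of_le_expect hne (le_refl (𝔼 p ∈ univ.offDiag, g p.1 p.2))
  refine ⟨p.1, p.2, (mem_offDiag.mp hp).2.2, ?_⟩
  rwa [Finset.expect_eq_sum_div_card, sum_offDiag_eq_sum_sub_sum_diag, hcard] at hle

noncomputable def framePotential (𝕜 : Type*) {E κ : Type*} [RCLike 𝕜] [NormedAddCommGroup E]
    [InnerProductSpace 𝕜 E] [Fintype κ] (x : κ → E) : ℝ :=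
  ∑ m, ∑ n, ‖inner 𝕜 (x m) (x n)‖ ^ 2

namespace EuclideanSpace

variable {𝕜 ι : Type*} [RCLike 𝕜] [Fintype ι]

/- `outerVec x` is the rank-one matrix `x xᴴ` and `diagOne` the identity matrix, flattened to
vectors of `𝕜^(ι × ι)`, whose inner product is then the Hilbert–Schmidt one `tr (Bᴴ A)`. -/
noncomputable def outerVec (x : EuclideanSpace 𝕜 ι) : EuclideanSpace 𝕜 (ι × ι) :=
  WithLp.toLp 2 fun p => x p.1 * star (x p.2)

noncomputable def diagOne [DecidableEq ι] : EuclideanSpace 𝕜 (ι × ι) :=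
  WithLp.toLp 2 fun p => (1 : Matrix ι ι 𝕜) p.1 p.2

theorem inner_outerVec_outerVec (x y : EuclideanSpace 𝕜 ι) :
    inner 𝕜 (outerVec x) (outerVec y) = (‖inner 𝕜 x y‖ : 𝕜) ^ 2 := by
  rw [← RCLike.mul_conj]
  simp only [outerVec, PiLp.inner_apply, RCLike.inner_apply, Fintype.sum_prod_type,
    map_sum, sum_mul_sum]
  refine sum_congr rfl fun i _ => sum_congr rfl fun j _ => ?_
  simp only [map_mul, RCLike.star_def, RCLike.conj_conj]
  ring

theorem inner_diagOne_outerVec [DecidableEq ι] (x : EuclideanSpace 𝕜 ι) :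
    inner 𝕜 (diagOne : EuclideanSpace 𝕜 (ι × ι)) (outerVec x) = (‖x‖ : 𝕜) ^ 2 := by
  rw [← inner_self_eq_norm_sq_to_K (𝕜 := 𝕜)]
  simp only [diagOne, outerVec, PiLp.inner_apply, RCLike.inner_apply, Fintype.sum_prod_type,
    Matrix.one_apply]
  refine sum_congr rfl fun i _ => ?_
  simp [apply_ite, RCLike.star_def]

theorem norm_diagOne_sq [DecidableEq ι] :
    ‖(diagOne : EuclideanSpace 𝕜 (ι × ι))‖ ^ 2 = Fintype.card ι := by
  simp only [diagOne, EuclideanSpace.norm_sq_eq, Fintype.sum_prod_type, Matrix.one_apply]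
  simp [apply_ite]

theorem sq_sum_norm_sq_le_card_mul_framePotential {κ : Type*} [Fintype κ]
    (x : κ → EuclideanSpace 𝕜 ι) :
    (∑ n, ‖x n‖ ^ 2) ^ 2 ≤ Fintype.card ι * framePotential 𝕜 x := by
  classical
  set V := ∑ n, outerVec (x n)
  have hV : ‖V‖ ^ 2 = framePotential 𝕜 x := by
    apply RCLike.ofReal_injective (K := 𝕜)
    rw [RCLike.ofReal_pow, ← inner_self_eq_norm_sq_to_K, sum_inner, framePotential]
    simp only [V, inner_sum, inner_outerVec_outerVec]
    push_cast
    rfl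
  have hdiag : inner 𝕜 diagOne V = ((∑ n, ‖x n‖ ^ 2 : ℝ) : 𝕜) := by
    rw [inner_sum]
    simp only [inner_diagOne_outerVec]
    push_cast
    rfl
  calc (∑ n, ‖x n‖ ^ 2) ^ 2 = ‖inner 𝕜 (diagOne : EuclideanSpace 𝕜 (ι × ι)) V‖ ^ 2 := by
        rw [hdiag, RCLike.norm_ofReal, sq_abs]
    _ ≤ (‖(diagOne : EuclideanSpace 𝕜 (ι × ι))‖ * ‖V‖) ^ 2 := by
        gcongr; exact norm_inner_le_norm _ _
    _ = Fintype.card ι * framePotential 𝕜 x := by rw [mul_pow, norm_diagOne_sq, hV]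

end EuclideanSpace

/-- **Rankin bound for projective packings**: for `N ≥ 2` unit vectors in `ℂ^d`
(representing `N` lines in the complex projective space `ℂP^{d−1}`), the squared
packing diameter `min_{m ≠ n} (1 − |⟨x_m, x_n⟩|²)` is at most
`((d−1)/d)·(N/(N−1))`. -/
theorem rankin_bound_projective (d N : ℕ) (hd : 0 < d) (hN : 2 ≤ N)
    (x : Fin N → EuclideanSpace ℂ (Fin d)) (hx : ∀ n, ‖x n‖ = 1) :
    ∃ m n : Fin N, m ≠ n ∧
      1 - ‖(inner ℂ (x m) (x n) : ℂ)‖ ^ 2 ≤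
        (((d : ℝ) - 1) / d) * ((N : ℝ) / ((N : ℝ) - 1)) := by
  have hframe : (N : ℝ) ^ 2 ≤ d * framePotential ℂ x := by
    simpa [hx] using EuclideanSpace.sq_sum_norm_sq_le_card_mul_framePotential x
  have hdiag : ∑ n, ‖(inner ℂ (x n) (x n) : ℂ)‖ ^ 2 = N := by simp [hx]
  obtain ⟨m, n, hmn, hle⟩ := Fintype.exists_ne_offDiag_average_le (by simpa using hN)
    fun m n => ‖(inner ℂ (x m) (x n) : ℂ)‖ ^ 2
  refine ⟨m, n, hmn, ?_⟩
  rw [Fintype.card_fin, ← framePotential, hdiag] at hle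
  have hdR : (0 : ℝ) < d := by exact_mod_cast hd
  have hNR : (2 : ℝ) ≤ N := by exact_mod_cast hN
  calc 1 - ‖(inner ℂ (x m) (x n) : ℂ)‖ ^ 2
      ≤ 1 - (framePotential ℂ x - N) / (N * (N - 1)) := by linarith
    _ ≤ 1 - ((N : ℝ) ^ 2 / d - N) / (N * (N - 1)) := by
        gcongr
        · nlinarith
        · rwa [div_le_iff₀' hdR]
    _ = (((d : ℝ) - 1) / d) * ((N : ℝ) / ((N : ℝ) - 1)) := by
        have hN1 : (N : ℝ) - 1 ≠ 0 := by linarith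
        field_simp
        ring
end
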